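/- arXiv:2112.14204 — 3 statements merged into one kernel-verified Lean document; each statement's English description precedes it below -/
import Mathlib

section
/- Let V* ∈ E with blocks R*_1,…,R*_n ∈ O(d) and clustering function C*, and let A ∈ ℝ^{nd×nd} be a symmetric block matrix whose (i,j)-th block equals w_{ij}·R*_i R*_jᵀ with w_{ij} = w_{ji} ∈ {0,1} and w_{ii} = 1 whenever C*(i) = C*(j) (blocks between different clusters are arbitrary, with A_{ji} = A_{ij}ᵀ). If A preserves V* by δ-separation for some δ > 0, then V* is a minimizer of ‖W − A·V*‖_F over W ∈ F, i.e., V* ∈ Π_F(A·V*). -/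
open Matrix BigOperators Finset

/-- Frobenius norm of a real matrix. -/
noncomputable def frobNorm {a b : Type*} [Fintype a] [Fintype b]
    (X : Matrix a b ℝ) : ℝ :=
  Real.sqrt (∑ i, ∑ j, X i j ^ 2)

/-- `Q` belongs to the real orthogonal group `O(d)`. -/
def IsOrthoMat {d : ℕ} (Q : Matrix (Fin d) (Fin d) ℝ) : Prop :=
  Q * Qᵀ = 1 ∧ Qᵀ * Q = 1

/-- `Q` belongs to the special orthogonal group `SO(d)`. -/
def IsSpecOrthoMat {d : ℕ} (Q : Matrix (Fin d) (Fin d) ℝ) : Prop :=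
  IsOrthoMat Q ∧ Q.det = 1

/-- The `(i,j)`-th `d × d` block of a block matrix. -/
def blockOf {n K d : ℕ} (X : Matrix (Fin n × Fin d) (Fin K × Fin d) ℝ)
    (i : Fin n) (j : Fin K) : Matrix (Fin d) (Fin d) ℝ :=
  fun a b => X (i, a) (j, b)

/-- The singular values of a real `d × d` matrix: square roots of the
eigenvalues of the Gram matrix `Xᴴ X`. -/
noncomputable def singVals {d : ℕ} (X : Matrix (Fin d) (Fin d) ℝ) : Fin d → ℝ :=
  fun k => Real.sqrt ((Matrix.isHermitian_conjTranspose_mul_self X).eigenvalues k)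

/-- Nuclear norm: the sum of the singular values. -/
noncomputable def nuclearNorm {d : ℕ} (X : Matrix (Fin d) (Fin d) ℝ) : ℝ :=
  ∑ k, singVals X k

/-- The map `μ` sending `X` to its `n × K` matrix of blockwise nuclear norms. -/
noncomputable def muMap {n K d : ℕ} (X : Matrix (Fin n × Fin d) (Fin K × Fin d) ℝ) :
    Matrix (Fin n) (Fin K) ℝ :=
  fun i j => nuclearNorm (blockOf X i j)

/-- `H` is a clustering matrix: 0/1 entries, each row sums to 1, each column sums to `m`. -/
def IsClusteringMatrix {n K : ℕ} (m : ℕ) (H : Matrix (Fin n) (Fin K) ℝ) : Prop :=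
  (∀ i j, H i j = 0 ∨ H i j = 1) ∧ (∀ i, ∑ j, H i j = 1) ∧ (∀ j, ∑ i, H i j = (m : ℝ))

/-- `V = (1_{1×K} ⊗ R) ⊙ (H ⊗ 1_{d×d})`: the `(i,j)`-th `d × d` block is `H i j • R i`. -/
def buildV {n K d : ℕ} (R : Fin n → Matrix (Fin d) (Fin d) ℝ)
    (H : Matrix (Fin n) (Fin K) ℝ) : Matrix (Fin n × Fin d) (Fin K × Fin d) ℝ :=
  fun p q => H p.1 q.1 * R p.1 p.2 q.2

/-- Membership in the set `F` (resp. `E` if `G = SO(d)`): `V` is built from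
blocks `R i ∈ G` and a clustering matrix `H`. -/
def InFeas {n K d : ℕ} (m : ℕ) (G : Matrix (Fin d) (Fin d) ℝ → Prop)
    (V : Matrix (Fin n × Fin d) (Fin K × Fin d) ℝ) : Prop :=
  ∃ (R : Fin n → Matrix (Fin d) (Fin d) ℝ) (H : Matrix (Fin n) (Fin K) ℝ),
    (∀ i, G (R i)) ∧ IsClusteringMatrix m H ∧ V = buildV R H

/-- Membership in `F`: blocks in `O(d)`. -/
def InF {n K d : ℕ} (m : ℕ) (V : Matrix (Fin n × Fin d) (Fin K × Fin d) ℝ) : Prop :=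
  InFeas m IsOrthoMat V

/-- Membership in `P_K(G)`: `M = bdiag(U₁,…,U_K) (P ⊗ I_d)` with `U_k ∈ G`
and `P` a permutation matrix, i.e. the `(a,b)` block of `M` is `U a` if `a = π b`, else `0`. -/
def InPK {K d : ℕ} (G : Matrix (Fin d) (Fin d) ℝ → Prop)
    (M : Matrix (Fin K × Fin d) (Fin K × Fin d) ℝ) : Prop :=
  ∃ (U : Fin K → Matrix (Fin d) (Fin d) ℝ) (π : Equiv.Perm (Fin K)),
    (∀ k, G (U k)) ∧ ∀ p q, M p q = if p.1 = π q.1 then U p.1 p.2 q.2 else 0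

/-- `dist_G(V₁,V₂) = min_{Q ∈ P_K(G)} ‖V₁ - V₂ Q‖_F` (the minimum is attained
since `P_K(G)` is compact; we express it as an infimum). -/
noncomputable def distG {n K d : ℕ} (G : Matrix (Fin d) (Fin d) ℝ → Prop)
    (V₁ V₂ : Matrix (Fin n × Fin d) (Fin K × Fin d) ℝ) : ℝ :=
  sInf {r | ∃ Q, InPK G Q ∧ r = frobNorm (V₁ - V₂ * Q)}

/-- Estimation error `ε_G(V)` with respect to a ground truth `Vstar`. -/
noncomputable def epsG {n K d : ℕ} (G : Matrix (Fin d) (Fin d) ℝ → Prop)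
    (Vstar V : Matrix (Fin n × Fin d) (Fin K × Fin d) ℝ) : ℝ :=
  distG G V Vstar

/-!
Every `W ∈ F` has `‖W‖_F² = n d`, so minimizing `‖W - A V*‖_F` over `F` amounts to maximizing
the Frobenius inner product `⟨W, A V*⟩ = ∑_{i,j} H_{ij} tr(R_iᵀ (A V*)_{ij})`. Since
`tr(Qᵀ X) ≤ ‖X‖_*` for orthogonal `Q`, this is at most `∑_i max_j ‖(A V*)_{ij}‖_*`, and the
separation puts the maximum at `j = C*(i)`. For `V*` the bound is attained: the within-cluster
blocks of `A` give `(A V*)_{i C*(i)} = s_i R*_i` with `s_i ≥ 0`, whose nuclear norm `s_i d`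
equals `tr(R*_iᵀ s_i R*_i)`.
-/

section FrobeniusInner

variable {a b : Type*} [Fintype a] [Fintype b]

def frobInner (X Y : Matrix a b ℝ) : ℝ := ∑ i, ∑ j, X i j * Y i j

lemma frobInner_eq_trace (X Y : Matrix a b ℝ) : frobInner X Y = (Xᵀ * Y).trace := by
  simp only [frobInner, trace, Matrix.diag, mul_apply, transpose_apply]
  exact Finset.sum_comm

lemma sum_sq_sub_eq_frobInner (X Y : Matrix a b ℝ) :
    ∑ i, ∑ j, (X - Y) i j ^ 2 = frobInner X X - 2 * frobInner X Y + frobInner Y Y := by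
  simp only [frobInner, Matrix.sub_apply, Finset.mul_sum, ← Finset.sum_sub_distrib,
    ← Finset.sum_add_distrib]
  exact Finset.sum_congr rfl fun _ _ => Finset.sum_congr rfl fun _ _ => by ring

lemma frobNorm_sub_le_of_frobInner_le {X X' Y : Matrix a b ℝ}
    (hnorm : frobInner X X = frobInner X' X') (hinner : frobInner X' Y ≤ frobInner X Y) :
    frobNorm (X - Y) ≤ frobNorm (X' - Y) := by
  refine Real.sqrt_le_sqrt ?_
  rw [sum_sq_sub_eq_frobInner, sum_sq_sub_eq_frobInner, hnorm]
  linarith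

lemma frobInner_smul_right (c : ℝ) (X Y : Matrix a b ℝ) :
    frobInner X (c • Y) = c * frobInner X Y := by
  simp only [frobInner, Matrix.smul_apply, smul_eq_mul, Finset.mul_sum, mul_left_comm]

end FrobeniusInner

section SquareMatrix

variable {ι : Type*} [Fintype ι]

lemma trace_transpose_mul_le (P Y : Matrix ι ι ℝ) :
    (Pᵀ * Y).trace ≤ ∑ k, √((Pᵀ * P) k k) * √((Yᵀ * Y) k k) := by
  simp only [trace, Matrix.diag, mul_apply, transpose_apply, ← sq]
  exact Finset.sum_le_sum fun k _ => Real.sum_mul_le_sqrt_mul_sqrt _ _ _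

lemma Matrix.IsHermitian.eigenvalues_eq_of_eq_smul_one [DecidableEq ι] {A : Matrix ι ι ℝ}
    (hA : A.IsHermitian) {c : ℝ} (h : A = c • 1) (k : ι) : hA.eigenvalues k = c := by
  subst h
  have hv := hA.mulVec_eigenvectorBasis k
  rw [smul_mulVec, one_mulVec] at hv
  have hne : (hA.eigenvectorBasis k : ι → ℝ) ≠ 0 :=
    (WithLp.ofLp_eq_zero 2).ne.2 (hA.eigenvectorBasis.orthonormal.ne_zero k)
  exact (smul_left_injective ℝ hne hv).symm

end SquareMatrix

section Orthogonal

variable {d : ℕ}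

lemma nuclearNorm_smul_of_transpose_mul_self {s : ℝ} (hs : 0 ≤ s)
    {Q : Matrix (Fin d) (Fin d) ℝ} (hQ : Qᵀ * Q = 1) : nuclearNorm (s • Q) = s * d := by
  have hgram : (s • Q)ᴴ * (s • Q) = s ^ 2 • 1 := by
    rw [conjTranspose_eq_transpose_of_trivial, transpose_smul, smul_mul_smul_comm, hQ, sq]
  simp only [nuclearNorm, singVals,
    (isHermitian_conjTranspose_mul_self (s • Q)).eigenvalues_eq_of_eq_smul_one hgram,
    Real.sqrt_sq hs, Finset.sum_const, Finset.card_univ, Fintype.card_fin, nsmul_eq_mul]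
  ring

lemma trace_transpose_mul_le_nuclearNorm {Q : Matrix (Fin d) (Fin d) ℝ} (hQ : Qᵀ * Q = 1)
    (X : Matrix (Fin d) (Fin d) ℝ) : (Qᵀ * X).trace ≤ nuclearNorm X := by
  set hX := isHermitian_conjTranspose_mul_self X
  set U : Matrix (Fin d) (Fin d) ℝ := (hX.eigenvectorUnitary : Matrix (Fin d) (Fin d) ℝ)
  have hUU : Uᵀ * U = 1 := by
    have h := (mem_unitaryGroup_iff').mp hX.eigenvectorUnitary.2
    rwa [star_eq_conjTranspose, conjTranspose_eq_transpose_of_trivial] at h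
  have hUU' : U * Uᵀ = 1 := mul_eq_one_comm.mp hUU
  have hdiag : Uᵀ * (Xᴴ * X) * U = diagonal hX.eigenvalues := by
    have h := hX.conjStarAlgAut_star_eigenvectorUnitary
    rw [Unitary.conjStarAlgAut_apply, Unitary.coe_star, star_star, star_eq_conjTranspose,
      conjTranspose_eq_transpose_of_trivial] at h
    exact h
  have hconj : ∀ P : Matrix (Fin d) (Fin d) ℝ, (P * U)ᵀ * (P * U) = Uᵀ * (Pᵀ * P) * U := by
    intro P
    simp only [transpose_mul, Matrix.mul_assoc]
  -- In the eigenbasis `U` of `XᵀX` the columns of `X * U` have lengths `√λ_k`.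
  calc (Qᵀ * X).trace = (Uᵀ * (Qᵀ * X) * U).trace := by
        rw [trace_mul_cycle, ← Matrix.mul_assoc, hUU', Matrix.one_mul]
    _ = ((Q * U)ᵀ * (X * U)).trace := by simp only [transpose_mul, Matrix.mul_assoc]
    _ ≤ ∑ k, √(((Q * U)ᵀ * (Q * U)) k k) * √(((X * U)ᵀ * (X * U)) k k) :=
        trace_transpose_mul_le _ _
    _ = nuclearNorm X := by
        rw [hconj, hconj, hQ, Matrix.mul_one, hUU, ← conjTranspose_eq_transpose_of_trivial X,
          hdiag]
        simp [nuclearNorm, singVals]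

lemma frobInner_self_of_transpose_mul_self {Q : Matrix (Fin d) (Fin d) ℝ}
    (hQ : Qᵀ * Q = 1) : frobInner Q Q = d := by
  rw [frobInner_eq_trace, hQ, trace_one, Fintype.card_fin]

end Orthogonal

section BlockMatrices

variable {n K d : ℕ} {R : Fin n → Matrix (Fin d) (Fin d) ℝ} {H : Matrix (Fin n) (Fin K) ℝ}

lemma blockOf_buildV (i : Fin n) (j : Fin K) : blockOf (buildV R H) i j = H i j • R i := rfl

lemma blockOf_mul_buildV (A : Matrix (Fin n × Fin d) (Fin n × Fin d) ℝ) (i : Fin n) (j : Fin K) :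
    blockOf (A * buildV R H) i j = ∑ l, H l j • (blockOf A i l * R l) := by
  ext a b
  simp only [blockOf, buildV, mul_apply, Fintype.sum_prod_type, Matrix.sum_apply,
    Matrix.smul_apply, smul_eq_mul, Finset.mul_sum]
  exact Finset.sum_congr rfl fun _ _ => Finset.sum_congr rfl fun _ _ => by ring

lemma frobInner_buildV (B : Matrix (Fin n × Fin d) (Fin K × Fin d) ℝ) :
    frobInner (buildV R H) B = ∑ i, ∑ j, H i j * frobInner (R i) (blockOf B i j) := by
  simp only [frobInner, Fintype.sum_prod_type, buildV, blockOf, Finset.mul_sum, mul_assoc]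
  exact Finset.sum_congr rfl fun _ _ => Finset.sum_comm

lemma frobInner_buildV_self (hR : ∀ i, (R i)ᵀ * R i = 1) (h01 : ∀ i j, H i j = 0 ∨ H i j = 1)
    (hrow : ∀ i, ∑ j, H i j = 1) : frobInner (buildV R H) (buildV R H) = n * d := by
  have hidem : ∀ i j, H i j * H i j = H i j := fun i j => by
    rcases h01 i j with h | h <;> simp [h]
  simp only [frobInner_buildV, blockOf_buildV, frobInner_smul_right,
    frobInner_self_of_transpose_mul_self (hR _), ← mul_assoc, hidem, ← Finset.sum_mul, hrow,
    one_mul, Finset.sum_const, Finset.card_univ, Fintype.card_fin, nsmul_eq_mul]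

lemma frobInner_buildV_le_sum_muMap (B : Matrix (Fin n × Fin d) (Fin K × Fin d) ℝ)
    {c : Fin n → Fin K} (hR : ∀ i, (R i)ᵀ * R i = 1) (hH : ∀ i j, 0 ≤ H i j)
    (hrow : ∀ i, ∑ j, H i j = 1) (hmax : ∀ i j, muMap B i j ≤ muMap B i (c i)) :
    frobInner (buildV R H) B ≤ ∑ i, muMap B i (c i) := by
  rw [frobInner_buildV]
  refine Finset.sum_le_sum fun i _ => ?_
  calc ∑ j, H i j * frobInner (R i) (blockOf B i j)
      ≤ ∑ j, H i j * muMap B i (c i) := by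
        refine Finset.sum_le_sum fun j _ => mul_le_mul_of_nonneg_left ?_ (hH i j)
        rw [frobInner_eq_trace]
        exact (trace_transpose_mul_le_nuclearNorm (hR i) _).trans (hmax i j)
    _ = muMap B i (c i) := by rw [← Finset.sum_mul, hrow, one_mul]

lemma frobInner_buildV_eq_sum_muMap (B : Matrix (Fin n × Fin d) (Fin K × Fin d) ℝ)
    {C : Fin n → Fin K} (hH : ∀ i j, H i j = if C i = j then 1 else 0)
    (hR : ∀ i, (R i)ᵀ * R i = 1) {s : Fin n → ℝ} (hs : ∀ i, 0 ≤ s i)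
    (hB : ∀ i, blockOf B i (C i) = s i • R i) :
    frobInner (buildV R H) B = ∑ i, muMap B i (C i) := by
  rw [frobInner_buildV]
  refine Finset.sum_congr rfl fun i _ => ?_
  simp only [hH, ite_mul, one_mul, zero_mul, Finset.sum_ite_eq, Finset.mem_univ, if_true]
  rw [muMap, hB, frobInner_smul_right, frobInner_self_of_transpose_mul_self (hR i),
    nuclearNorm_smul_of_transpose_mul_self (hs i) (hR i)]

lemma blockOf_mul_buildV_diag {A : Matrix (Fin n × Fin d) (Fin n × Fin d) ℝ}
    {C : Fin n → Fin K} {w : Fin n → Fin n → ℝ} (hH : ∀ i j, H i j = if C i = j then 1 else 0)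
    (hR : ∀ i, (R i)ᵀ * R i = 1)
    (hA : ∀ i j, C i = C j → blockOf A i j = w i j • (R i * (R j)ᵀ)) (i : Fin n) :
    blockOf (A * buildV R H) i (C i) = (∑ l with C l = C i, w i l) • R i := by
  simp only [blockOf_mul_buildV, hH, ite_smul, one_smul, zero_smul, ← Finset.sum_filter,
    Finset.sum_smul]
  refine Finset.sum_congr rfl fun l hl => ?_
  rw [hA i l (Finset.mem_filter.mp hl).2.symm, smul_mul_assoc, Matrix.mul_assoc, hR, Matrix.mul_one]

end BlockMatrices

theorem stmt7_general {n K d m : ℕ} (G : Matrix (Fin d) (Fin d) ℝ → Prop)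
    (hG : G = (IsOrthoMat (d := d)) ∨ G = (IsSpecOrthoMat (d := d)))
    (R : Fin n → Matrix (Fin d) (Fin d) ℝ) (hR : ∀ i, G (R i))
    (C : Fin n → Fin K)
    (H : Matrix (Fin n) (Fin K) ℝ)
    (hH : ∀ i j, H i j = if C i = j then 1 else 0)
    (A : Matrix (Fin n × Fin d) (Fin n × Fin d) ℝ)
    (w : Fin n → Fin n → ℝ)
    (hw01 : ∀ i j, w i j = 0 ∨ w i j = 1)
    (hAsame : ∀ i j, C i = C j → blockOf A i j = w i j • (R i * (R j)ᵀ))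
    (δ : ℝ) (hδ : 0 < δ)
    (hsep : ∀ i j, j ≠ C i →
      δ ≤ muMap (A * buildV R H) i (C i) - muMap (A * buildV R H) i j) :
    ∀ W, InF m W →
      frobNorm (buildV R H - A * buildV R H) ≤ frobNorm (W - A * buildV R H) := by
  rintro _ ⟨R', H', hR', ⟨hH'01, hH'row, -⟩, rfl⟩
  have hRorth : ∀ i, (R i)ᵀ * R i = 1 := by
    rcases hG with rfl | rfl
    exacts [fun i => (hR i).2, fun i => (hR i).1.2]
  have hH01 : ∀ i j, H i j = 0 ∨ H i j = 1 := fun i j => by rw [hH]; split_ifs <;> simp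
  have hHrow : ∀ i, ∑ j, H i j = 1 := fun i => by simp [hH]
  have hmax : ∀ i j, muMap (A * buildV R H) i j ≤ muMap (A * buildV R H) i (C i) := by
    intro i j
    rcases eq_or_ne j (C i) with rfl | hj
    · exact le_rfl
    · linarith [hsep i j hj]
  apply frobNorm_sub_le_of_frobInner_le
  · rw [frobInner_buildV_self hRorth hH01 hHrow,
      frobInner_buildV_self (fun i => (hR' i).2) hH'01 hH'row]
  · calc frobInner (buildV R' H') (A * buildV R H)
        ≤ ∑ i, muMap (A * buildV R H) i (C i) :=
          frobInner_buildV_le_sum_muMap _ (fun i => (hR' i).2)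
            (fun i j => by rcases hH'01 i j with h | h <;> simp [h]) hH'row hmax
      _ = frobInner (buildV R H) (A * buildV R H) :=
          (frobInner_buildV_eq_sum_muMap _ hH hRorth
            (fun i => Finset.sum_nonneg fun l _ => by rcases hw01 i l with h | h <;> simp [h])
            (blockOf_mul_buildV_diag hH hRorth hAsame)).symm

/-- if `A` has blocks `A_{ij} = w_{ij} R*_i (R*_j)ᵀ` within
clusters (`w` symmetric 0/1-valued with `w_{ii} = 1`), `A` is blockwise
symmetric, and `A` preserves `V*` by `δ`-separation for some `δ > 0`, then
`V* ∈ Π_F(A V*)`, i.e. `V*` minimizes `‖W - A V*‖_F` over `W ∈ F`. -/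
theorem stmt7 {n K d m : ℕ} (G : Matrix (Fin d) (Fin d) ℝ → Prop)
    (hG : G = (IsOrthoMat (d := d)) ∨ G = (IsSpecOrthoMat (d := d)))
    (R : Fin n → Matrix (Fin d) (Fin d) ℝ) (hR : ∀ i, G (R i))
    (C : Fin n → Fin K)
    (hsize : ∀ j, (Finset.univ.filter fun i => C i = j).card = m)
    (H : Matrix (Fin n) (Fin K) ℝ)
    (hH : ∀ i j, H i j = if C i = j then 1 else 0)
    (A : Matrix (Fin n × Fin d) (Fin n × Fin d) ℝ)
    (w : Fin n → Fin n → ℝ)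
    (hw01 : ∀ i j, w i j = 0 ∨ w i j = 1) (hwsymm : ∀ i j, w i j = w j i)
    (hwdiag : ∀ i, w i i = 1)
    (hAsame : ∀ i j, C i = C j → blockOf A i j = w i j • (R i * (R j)ᵀ))
    (hAsymm : ∀ i j, blockOf A j i = (blockOf A i j)ᵀ)
    (δ : ℝ) (hδ : 0 < δ)
    (hsep : ∀ i j, j ≠ C i →
      δ ≤ muMap (A * buildV R H) i (C i) - muMap (A * buildV R H) i j) :
    ∀ W, InF m W →
      frobNorm (buildV R H - A * buildV R H) ≤ frobNorm (W - A * buildV R H) :=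
  stmt7_general G hG R hR C H hH A w hw01 hAsame δ hδ hsep
end

section
/- Let Z ∈ ℝ^{Kd×Kd} be viewed as a K×K array of d×d blocks Z_{ij}. Suppose that for every i ∈ [K]: (a) Σ_{j=1}^K ‖Z_{ij}‖_F ≤ √d; (b) every singular value of Z_{ii} lies in [0,1]; and (c) tr(Z_{ii}) equals the sum of the singular values of Z_{ii}. Then ‖Z − I_{Kd}‖_F² ≤ (1 + 1/d)·(Kd − tr(Z))². -/
open Matrix BigOperators Finset

/-!
Put `tᵢ = d - tr Zᵢᵢ = ∑ₖ (1 - σₖ(Zᵢᵢ)) ≥ 0`. Because `tr Zᵢᵢ` is the sum of the singular values,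
`‖Zᵢᵢ - I‖_F² = ∑ₖ (1 - σₖ)² ≤ tᵢ²`. Cauchy–Schwarz gives `tr Zᵢᵢ ≤ √d ‖Zᵢᵢ‖_F`, so the row budget
leaves `∑_{j ≠ i} ‖Zᵢⱼ‖_F ≤ tᵢ / √d`, whence `∑_{j ≠ i} ‖Zᵢⱼ‖_F² ≤ tᵢ² / d`. Summing over the rows,
`‖Z - I‖_F² ≤ (1 + 1/d) ∑ᵢ tᵢ² ≤ (1 + 1/d) (∑ᵢ tᵢ)² = (1 + 1/d) (Kd - tr Z)²`.
-/

section Frobenius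

variable {m n : Type*} [Fintype m] [Fintype n]

lemma frobNorm_nonneg (X : Matrix m n ℝ) : 0 ≤ frobNorm X := Real.sqrt_nonneg _

lemma frobNorm_sq (X : Matrix m n ℝ) : frobNorm X ^ 2 = ∑ i, ∑ j, X i j ^ 2 :=
  Real.sq_sqrt (by positivity)

lemma trace_le_sqrt_card_mul_frobNorm (X : Matrix n n ℝ) :
    X.trace ≤ √(Fintype.card n) * frobNorm X := by
  calc X.trace = ∑ i, 1 * X i i := by simp [Matrix.trace]
    _ ≤ √(∑ _i : n, 1 ^ 2) * √(∑ i, X i i ^ 2) := Real.sum_mul_le_sqrt_mul_sqrt _ _ _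
    _ ≤ √(Fintype.card n) * frobNorm X := by
      simp only [one_pow, sum_const, card_univ, nsmul_eq_mul, mul_one]
      gcongr
      exact Real.sqrt_le_sqrt <| sum_le_sum fun i _ =>
        single_le_sum (f := fun j => X i j ^ 2) (fun j _ => sq_nonneg _) (mem_univ i)

lemma frobNorm_sub_one_sq [DecidableEq n] (X : Matrix n n ℝ) :
    frobNorm (X - 1) ^ 2 = frobNorm X ^ 2 - 2 * X.trace + Fintype.card n := by
  simp [frobNorm_sq, sub_sq, sum_add_distrib, sum_sub_distrib, Matrix.one_apply, Matrix.trace,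
    mul_sum]

lemma card_mul_sum_sq_le_of_frobNorm_add_sum_le (X : Matrix n n ℝ) {ι : Type*} (s : Finset ι)
    (f : ι → ℝ) (hf : ∀ j ∈ s, 0 ≤ f j)
    (h : frobNorm X + ∑ j ∈ s, f j ≤ √(Fintype.card n)) :
    Fintype.card n * ∑ j ∈ s, f j ^ 2 ≤ (Fintype.card n - X.trace) ^ 2 := by
  set c : ℝ := (Fintype.card n : ℝ)
  have hsum : √c * ∑ j ∈ s, f j ≤ c - X.trace :=
    calc √c * ∑ j ∈ s, f j ≤ √c * (√c - frobNorm X) := by gcongr; linarith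
      _ = c - √c * frobNorm X := by rw [mul_sub, Real.mul_self_sqrt (Nat.cast_nonneg _)]
      _ ≤ c - X.trace := by linarith [trace_le_sqrt_card_mul_frobNorm X]
  calc c * ∑ j ∈ s, f j ^ 2 ≤ c * (∑ j ∈ s, f j) ^ 2 := by
        gcongr; exact sum_sq_le_sq_sum_of_nonneg hf
    _ = (√c * ∑ j ∈ s, f j) ^ 2 := by rw [mul_pow, Real.sq_sqrt (Nat.cast_nonneg _)]
    _ ≤ (c - X.trace) ^ 2 := by
        gcongr
        exact mul_nonneg (Real.sqrt_nonneg c) (sum_nonneg hf)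

end Frobenius

section SingularValues

variable {d : ℕ}

lemma sum_singVals_sq (X : Matrix (Fin d) (Fin d) ℝ) :
    ∑ k, singVals X k ^ 2 = frobNorm X ^ 2 := by
  have hX := isHermitian_conjTranspose_mul_self X
  calc ∑ k, singVals X k ^ 2 = ∑ k, hX.eigenvalues k :=
        sum_congr rfl fun k _ => Real.sq_sqrt (eigenvalues_conjTranspose_mul_self_nonneg X k)
    _ = (Xᴴ * X).trace := by simpa using hX.trace_eq_sum_eigenvalues.symm
    _ = frobNorm X ^ 2 := by
        rw [frobNorm_sq]
        simp only [Matrix.trace, Matrix.diag, mul_apply, conjTranspose_apply, star_trivial, ← sq]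
        exact sum_comm

lemma frobNorm_sub_one_sq_le (X : Matrix (Fin d) (Fin d) ℝ) (h1 : ∀ k, singVals X k ≤ 1)
    (htr : X.trace = ∑ k, singVals X k) :
    frobNorm (X - 1) ^ 2 ≤ (d - X.trace) ^ 2 := by
  have hdist : frobNorm (X - 1) ^ 2 = ∑ k, (1 - singVals X k) ^ 2 := by
    rw [frobNorm_sub_one_sq, ← sum_singVals_sq, htr]
    simp [sub_sq, sum_add_distrib, sum_sub_distrib, mul_sum]
    ring
  have hdefect : (d : ℝ) - X.trace = ∑ k, (1 - singVals X k) := by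
    simp [htr, sum_sub_distrib]
  rw [hdist, hdefect]
  exact sum_sq_le_sq_sum_of_nonneg fun k _ => sub_nonneg.2 (h1 k)

end SingularValues

section Blocks

variable {n K d : ℕ}

lemma frobNorm_sq_eq_sum_blockOf (X : Matrix (Fin n × Fin d) (Fin K × Fin d) ℝ) :
    frobNorm X ^ 2 = ∑ i, ∑ j, frobNorm (blockOf X i j) ^ 2 := by
  simp only [frobNorm_sq, blockOf, Fintype.sum_prod_type]
  exact sum_congr rfl fun i _ => sum_comm

lemma blockOf_sub_one_self (Z : Matrix (Fin K × Fin d) (Fin K × Fin d) ℝ) (i : Fin K) :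
    blockOf (Z - 1) i i = blockOf Z i i - 1 := by
  ext a b
  simp [blockOf, one_apply]

lemma blockOf_sub_one_of_ne (Z : Matrix (Fin K × Fin d) (Fin K × Fin d) ℝ) {i j : Fin K}
    (hij : i ≠ j) : blockOf (Z - 1) i j = blockOf Z i j := by
  ext a b
  simp [blockOf, one_apply, hij]

lemma trace_eq_sum_trace_blockOf (Z : Matrix (Fin K × Fin d) (Fin K × Fin d) ℝ) :
    Z.trace = ∑ i, (blockOf Z i i).trace := by
  simp only [Matrix.trace, Matrix.diag, blockOf, Fintype.sum_prod_type]

lemma sum_frobNorm_blockOf_sub_one_sq_le (Z : Matrix (Fin K × Fin d) (Fin K × Fin d) ℝ)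
    (i : Fin K) (hd : 0 < d) (ha : ∑ j, frobNorm (blockOf Z i j) ≤ √d)
    (h1 : ∀ k, singVals (blockOf Z i i) k ≤ 1)
    (htr : (blockOf Z i i).trace = ∑ k, singVals (blockOf Z i i) k) :
    ∑ j, frobNorm (blockOf (Z - 1) i j) ^ 2
      ≤ (1 + 1 / (d : ℝ)) * (d - (blockOf Z i i).trace) ^ 2 := by
  rw [Fintype.sum_eq_add_sum_compl i] at ha ⊢
  rw [blockOf_sub_one_self, sum_congr rfl fun j hj =>
    by rw [blockOf_sub_one_of_ne Z (by simpa [eq_comm] using hj)]]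
  have hdiag := frobNorm_sub_one_sq_le _ h1 htr
  have hoff := card_mul_sum_sq_le_of_frobNorm_add_sum_le (blockOf Z i i) _ _
    (fun j _ => frobNorm_nonneg (blockOf Z i j)) (by simpa using ha)
  rw [Fintype.card_fin, mul_comm, ← le_div_iff₀ (Nat.cast_pos.2 hd)] at hoff
  rw [add_mul, one_mul, one_div_mul_eq_div]
  exact add_le_add hdiag hoff

end Blocks

/-- if every block row of `Z` satisfies `∑_j ‖Z_{ij}‖_F ≤ √d`,
every singular value of each diagonal block lies in `[0,1]`, and the trace of
each diagonal block equals the sum of its singular values, then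
`‖Z - I‖_F² ≤ (1 + 1/d) (Kd - tr Z)²`. -/
theorem stmt12 {K d : ℕ} (Z : Matrix (Fin K × Fin d) (Fin K × Fin d) ℝ)
    (ha : ∀ i, ∑ j, frobNorm (blockOf Z i j) ≤ Real.sqrt d)
    (hb : ∀ i k, singVals (blockOf Z i i) k ∈ Set.Icc (0 : ℝ) 1)
    (hc : ∀ i, (blockOf Z i i).trace = ∑ k, singVals (blockOf Z i i) k) :
    frobNorm (Z - 1) ^ 2 ≤ (1 + 1/(d : ℝ)) * ((K * d : ℝ) - Z.trace) ^ 2 := by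
  rcases Nat.eq_zero_or_pos d with rfl | hd
  · simp [frobNorm, Matrix.trace]
  have hdefect : ∀ i, 0 ≤ (d : ℝ) - (blockOf Z i i).trace := fun i => by
    rw [hc i, sub_nonneg]
    simpa using sum_le_sum fun k (_ : k ∈ univ) => (hb i k).2
  calc frobNorm (Z - 1) ^ 2 = ∑ i, ∑ j, frobNorm (blockOf (Z - 1) i j) ^ 2 :=
        frobNorm_sq_eq_sum_blockOf _
    _ ≤ ∑ i, (1 + 1 / (d : ℝ)) * (d - (blockOf Z i i).trace) ^ 2 :=
        sum_le_sum fun i _ =>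
          sum_frobNorm_blockOf_sub_one_sq_le Z i hd (ha i) (fun k => (hb i k).2) (hc i)
    _ = (1 + 1 / (d : ℝ)) * ∑ i, (d - (blockOf Z i i).trace) ^ 2 := (mul_sum ..).symm
    _ ≤ (1 + 1 / (d : ℝ)) * (∑ i, (d - (blockOf Z i i).trace)) ^ 2 := by
        gcongr; exact sum_sq_le_sq_sum_of_nonneg fun i _ => hdefect i
    _ = (1 + 1 / (d : ℝ)) * ((K * d : ℝ) - Z.trace) ^ 2 := by
        simp [trace_eq_sum_trace_blockOf, sum_sub_distrib]
end

section
/- Let V ∈ F have clustering matrix H and let V* ∈ E have clustering matrix H*. If H ≠ H*·P for every K×K permutation matrix P (i.e., the clustering of V does not agree with that of V* up to relabeling of clusters), then for every Q ∈ P_K(O(d)) one has ‖V − V*·Q‖_F ≥ √(2d); in particular ε_{O(d)}(V) ≥ √(2d) ≥ √2. -/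
open Matrix BigOperators Finset

/-!
Each row of a clustering matrix is a standard basis vector, so if `H` differs from every
relabeling `H* ∘ π`, some object `i` is put into a cluster `j₁` by `V` but not by `V* Q`, and into
another cluster `j₂` by `V* Q` but not by `V`. The blocks `(i, j₁)` and `(i, j₂)` of `V - V* Q` are
then `R i` and `-(R*_i U_{π j₂})`, both orthogonal, so each contributes `d` to `‖V - V* Q‖_F²`.
-/

lemma eq_pi_single_of_zero_one_of_sum_eq_one {K : ℕ} {f : Fin K → ℝ}
    (h01 : ∀ j, f j = 0 ∨ f j = 1) (hsum : ∑ j, f j = 1) : ∃ j, f = Pi.single j 1 := by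
  have hnonneg : ∀ j, 0 ≤ f j := fun j => by rcases h01 j with h | h <;> simp [h]
  obtain ⟨j, hj⟩ : ∃ j, f j = 1 := by
    by_contra! h
    simp [fun j => (h01 j).resolve_right (h j)] at hsum
  refine ⟨j, funext fun j' => ?_⟩
  rcases eq_or_ne j' j with rfl | hne
  · simp [hj]
  rw [Pi.single_eq_of_ne hne]
  refine (h01 j').resolve_right fun hj' => ?_
  have hpair : ∑ x ∈ {j', j}, f x ≤ ∑ x, f x :=
    Finset.sum_le_sum_of_subset_of_nonneg (Finset.subset_univ _) fun x _ _ => hnonneg x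
  rw [Finset.sum_pair hne, hj', hj, hsum] at hpair
  linarith

lemma exists_row_swap_of_ne {n K : ℕ} {H H' : Matrix (Fin n) (Fin K) ℝ}
    (h01 : ∀ i j, H i j = 0 ∨ H i j = 1) (hrow : ∀ i, ∑ j, H i j = 1)
    (h01' : ∀ i j, H' i j = 0 ∨ H' i j = 1) (hrow' : ∀ i, ∑ j, H' i j = 1) (hne : H ≠ H') :
    ∃ i j₁ j₂, H i j₁ = 1 ∧ H' i j₁ = 0 ∧ H i j₂ = 0 ∧ H' i j₂ = 1 := by
  obtain ⟨i, hi⟩ : ∃ i, H i ≠ H' i := by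
    by_contra! h
    exact hne (funext h)
  obtain ⟨j₁, hj₁⟩ := eq_pi_single_of_zero_one_of_sum_eq_one (h01 i) (hrow i)
  obtain ⟨j₂, hj₂⟩ := eq_pi_single_of_zero_one_of_sum_eq_one (h01' i) (hrow' i)
  have hj : j₁ ≠ j₂ := by
    rintro rfl
    exact hi (hj₁.trans hj₂.symm)
  exact ⟨i, j₁, j₂, by simp [hj₁], by simp [hj₂, hj], by simp [hj₁, hj.symm], by simp [hj₂]⟩

lemma IsOrthoMat.mul {d : ℕ} {A B : Matrix (Fin d) (Fin d) ℝ}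
    (hA : IsOrthoMat A) (hB : IsOrthoMat B) : IsOrthoMat (A * B) := by
  constructor
  · rw [Matrix.transpose_mul, Matrix.mul_assoc, ← Matrix.mul_assoc B, hB.1,
      Matrix.one_mul, hA.1]
  · rw [Matrix.transpose_mul, Matrix.mul_assoc, ← Matrix.mul_assoc Aᵀ, hA.2,
      Matrix.one_mul, hB.2]

lemma sum_sq_eq_of_mul_transpose_eq_one {d : ℕ} {A : Matrix (Fin d) (Fin d) ℝ}
    (h : A * Aᵀ = 1) : ∑ a, ∑ b, A a b ^ 2 = d := by
  have hdiag : ∀ a, ∑ b, A a b ^ 2 = (A * Aᵀ) a a := fun a => by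
    simp [Matrix.mul_apply, sq]
  simp [hdiag, h]

lemma sum_sq_eq_sum_sum_sq_blockOf {n K d : ℕ}
    (X : Matrix (Fin n × Fin d) (Fin K × Fin d) ℝ) :
    ∑ p, ∑ q, X p q ^ 2 = ∑ i, ∑ j, ∑ a, ∑ b, blockOf X i j a b ^ 2 := by
  simp only [blockOf, Fintype.sum_prod_type]
  exact Finset.sum_congr rfl fun i _ => Finset.sum_comm

lemma add_sum_sq_blockOf_le {n K d : ℕ} (X : Matrix (Fin n × Fin d) (Fin K × Fin d) ℝ)
    {i : Fin n} {j₁ j₂ : Fin K} (hj : j₁ ≠ j₂) :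
    ∑ a, ∑ b, blockOf X i j₁ a b ^ 2 + ∑ a, ∑ b, blockOf X i j₂ a b ^ 2 ≤
      ∑ p, ∑ q, X p q ^ 2 := by
  have hnonneg : ∀ i j, 0 ≤ ∑ a, ∑ b, blockOf X i j a b ^ 2 := fun _ _ => by positivity
  rw [sum_sq_eq_sum_sum_sq_blockOf,
    ← Finset.sum_pair hj (f := fun j => ∑ a, ∑ b, blockOf X i j a b ^ 2)]
  calc ∑ j ∈ {j₁, j₂}, ∑ a, ∑ b, blockOf X i j a b ^ 2
      ≤ ∑ j, ∑ a, ∑ b, blockOf X i j a b ^ 2 :=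
        Finset.sum_le_sum_of_subset_of_nonneg (Finset.subset_univ _) fun j _ _ => hnonneg i j
    _ ≤ ∑ i, ∑ j, ∑ a, ∑ b, blockOf X i j a b ^ 2 :=
        Finset.single_le_sum (f := fun i => ∑ j, ∑ a, ∑ b, blockOf X i j a b ^ 2)
          (fun i _ => Finset.sum_nonneg fun j _ => hnonneg i j) (Finset.mem_univ i)

lemma blockOf_buildV_sub_buildV_mul {n K d : ℕ} (R Rs : Fin n → Matrix (Fin d) (Fin d) ℝ)
    (H Hs : Matrix (Fin n) (Fin K) ℝ) {Q : Matrix (Fin K × Fin d) (Fin K × Fin d) ℝ}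
    {U : Fin K → Matrix (Fin d) (Fin d) ℝ} {π : Equiv.Perm (Fin K)}
    (hQ : ∀ p q, Q p q = if p.1 = π q.1 then U p.1 p.2 q.2 else 0) (i : Fin n) (j : Fin K) :
    blockOf (buildV R H - buildV Rs Hs * Q) i j =
      H i j • R i - Hs i (π j) • (Rs i * U (π j)) := by
  ext a b
  have hterm : ∀ k, ∑ c, buildV Rs Hs (i, a) (k, c) * Q (k, c) (j, b) =
      if k = π j then Hs i k * (Rs i * U k) a b else 0 := fun k => by
    by_cases hk : k = π j
    · simp [buildV, hQ, hk, Matrix.mul_apply, Finset.mul_sum, mul_assoc]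
    · simp [buildV, hQ, hk]
  rw [blockOf, Matrix.sub_apply, Matrix.mul_apply, Fintype.sum_prod_type]
  simp_rw [hterm]
  simp [buildV]

lemma inPK_one {K d : ℕ} {G : Matrix (Fin d) (Fin d) ℝ → Prop} (hG : G 1) :
    InPK G (1 : Matrix (Fin K × Fin d) (Fin K × Fin d) ℝ) :=
  ⟨fun _ => 1, Equiv.refl _, fun _ => hG, fun p q => by
    by_cases h : p.1 = q.1 <;> simp [Matrix.one_apply, Prod.ext_iff, h]⟩

lemma le_distG {n K d : ℕ} {G : Matrix (Fin d) (Fin d) ℝ → Prop} (hG : G 1)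
    {V₁ V₂ : Matrix (Fin n × Fin d) (Fin K × Fin d) ℝ} {r : ℝ}
    (h : ∀ Q, InPK G Q → r ≤ frobNorm (V₁ - V₂ * Q)) : r ≤ distG G V₁ V₂ :=
  le_csInf ⟨_, 1, inPK_one hG, rfl⟩ (by rintro _ ⟨Q, hQ, rfl⟩; exact h Q hQ)

lemma sqrt_two_mul_le_frobNorm {n K d m : ℕ} {R Rs : Fin n → Matrix (Fin d) (Fin d) ℝ}
    {H Hs : Matrix (Fin n) (Fin K) ℝ} (hR : ∀ i, IsOrthoMat (R i)) (hH : IsClusteringMatrix m H)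
    (hRs : ∀ i, IsOrthoMat (Rs i)) (hHs : IsClusteringMatrix m Hs)
    (hmismatch : ∀ σ : Equiv.Perm (Fin K), H ≠ fun i j => Hs i (σ j))
    {Q : Matrix (Fin K × Fin d) (Fin K × Fin d) ℝ} (hQ : InPK IsOrthoMat Q) :
    Real.sqrt (2 * d) ≤ frobNorm (buildV R H - buildV Rs Hs * Q) := by
  obtain ⟨U, π, hU, hQ⟩ := hQ
  obtain ⟨i, j₁, j₂, h₁, hs₁, h₂, hs₂⟩ := exists_row_swap_of_ne hH.1 hH.2.1
    (fun i j => hHs.1 i (π j)) (fun i => (Equiv.sum_comp π (Hs i)).trans (hHs.2.1 i))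
    (hmismatch π)
  have hj : j₁ ≠ j₂ := by
    rintro rfl
    simp [h₁] at h₂
  have hblock := blockOf_buildV_sub_buildV_mul R Rs H Hs hQ i
  have hsq₁ : ∑ a, ∑ b, blockOf (buildV R H - buildV Rs Hs * Q) i j₁ a b ^ 2 = d := by
    simpa [hblock, h₁, hs₁] using sum_sq_eq_of_mul_transpose_eq_one (hR i).1
  have hsq₂ : ∑ a, ∑ b, blockOf (buildV R H - buildV Rs Hs * Q) i j₂ a b ^ 2 = d := by
    simpa [hblock, h₂, hs₂] using
      sum_sq_eq_of_mul_transpose_eq_one ((hRs i).mul (hU (π j₂))).1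
  have hrow := add_sum_sq_blockOf_le (buildV R H - buildV Rs Hs * Q) (i := i) hj
  exact Real.sqrt_le_sqrt (by linarith)

/-- if the clustering matrix `H` of `V ∈ F` does not agree with
the clustering matrix `H*` of the ground truth `V* ∈ E` up to a relabeling of
clusters, then `‖V - V* Q‖_F ≥ √(2d)` for every `Q ∈ P_K(O(d))`; in particular
`ε_{O(d)}(V) ≥ √(2d) ≥ √2`. -/
theorem stmt17 {n K d m : ℕ} (hd : 0 < d)
    (G : Matrix (Fin d) (Fin d) ℝ → Prop)
    (hG : G = (IsOrthoMat (d := d)) ∨ G = (IsSpecOrthoMat (d := d)))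
    (R Rs : Fin n → Matrix (Fin d) (Fin d) ℝ)
    (H Hs : Matrix (Fin n) (Fin K) ℝ)
    (hR : ∀ i, IsOrthoMat (R i)) (hH : IsClusteringMatrix m H)
    (hRs : ∀ i, G (Rs i)) (hHs : IsClusteringMatrix m Hs)
    (hmismatch : ∀ σ : Equiv.Perm (Fin K), H ≠ fun i j => Hs i (σ j)) :
    (∀ Q, InPK IsOrthoMat Q →
      Real.sqrt (2 * d) ≤ frobNorm (buildV R H - buildV Rs Hs * Q)) ∧
    Real.sqrt (2 * d) ≤ epsG IsOrthoMat (buildV Rs Hs) (buildV R H) ∧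
    Real.sqrt 2 ≤ Real.sqrt (2 * d) := by
  have hRsO : ∀ i, IsOrthoMat (Rs i) := by
    rcases hG with rfl | rfl
    exacts [hRs, fun i => (hRs i).1]
  have hbound := fun Q (hQ : InPK IsOrthoMat Q) =>
    sqrt_two_mul_le_frobNorm hR hH hRsO hHs hmismatch hQ
  have hd' : (1 : ℝ) ≤ d := by exact_mod_cast hd
  exact ⟨hbound, le_distG (by simp [IsOrthoMat]) hbound,
    Real.sqrt_le_sqrt (by linarith)⟩
end
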